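/- arXiv:1305.4854 — 5 statements merged into one kernel-verified Lean document; each statement's English description precedes it below -/
import Mathlib

section
/- Let (X,d) be a proper geodesic metric space with a line and associated Busemann function b = b⁺ = -b⁻ (assuming b⁺+b⁻ ≡ 0). Then for every a ∈ ℝ the function a·b is c-concave for the cost c(x,y) = d²(x,y)/2, and its c-transform satisfies (a·b)^c = -a·b - a²/2. -/
/-!
The Busemann function `b` is `1`-Lipschitz, so `a (b x - b y) ≤ |a| d(x, y) ≤ d(x, y)² / 2 + a² / 2`,
which bounds `(a b)^c` from below by `-a b - a² / 2`. The bound is nearly attained: walking from `y`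
a distance `|a|` along a geodesic towards `γ t` (if `a ≥ 0`) or `γ (-t)` (if `a < 0`, where
`b = -b⁻` is used), with `t` large, increases `a b` by almost `a²`. Applied to `-a`, this gives
`a b = ψ^c` for `ψ = -a b - a² / 2`.
-/

open Filter Set Topology

def IsGeodesicSpace (X : Type*) [MetricSpace X] : Prop :=
  ∀ x y : X, ∃ g : ℝ → X, g 0 = x ∧ g (dist x y) = y ∧
    ∀ s ∈ Icc (0 : ℝ) (dist x y), ∀ t ∈ Icc (0 : ℝ) (dist x y), dist (g s) (g t) = |s - t|

section Busemann

variable {X : Type*} [MetricSpace X] {γ : ℝ → X} {b : X → ℝ}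

lemma busemann_sub_le_dist (hb : ∀ x, Tendsto (fun t ↦ t - dist x (γ t)) atTop (𝓝 (b x)))
    (x y : X) : b x - b y ≤ dist x y :=
  le_of_tendsto ((hb x).sub (hb y)) <| Eventually.of_forall fun t ↦ by
    linarith [dist_triangle y x (γ t), dist_comm x y]

lemma sub_dist_le_busemann (hγ : Isometry γ)
    (hb : ∀ x, Tendsto (fun t ↦ t - dist x (γ t)) atTop (𝓝 (b x))) (x : X) (t : ℝ) :
    t - dist x (γ t) ≤ b x := by
  refine ge_of_tendsto (hb x) ?_
  filter_upwards [eventually_ge_atTop t] with s hts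
  have hγts : dist (γ t) (γ s) = s - t := by
    rw [hγ.dist_eq, Real.dist_eq, abs_sub_comm, abs_of_nonneg (sub_nonneg.2 hts)]
  linarith [dist_triangle x (γ t) (γ s)]

lemma exists_dist_eq_add_sub_le_busemann
    (hgeo : IsGeodesicSpace X) (hγ : Isometry γ)
    (hb : ∀ x, Tendsto (fun t ↦ t - dist x (γ t)) atTop (𝓝 (b x)))
    (x : X) {c ε : ℝ} (hc : 0 ≤ c) (hε : 0 < ε) :
    ∃ y, dist x y = c ∧ b x + c - ε ≤ b y := by
  have hclose : ∀ᶠ t in atTop, b x - ε < t - dist x (γ t) :=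
    (hb x).eventually (eventually_gt_nhds (by linarith))
  have hfar : ∀ᶠ t in atTop, c ≤ dist x (γ t) := by
    filter_upwards [eventually_ge_atTop (c + dist x (γ 0))] with t ht
    have ht0 : 0 ≤ t := (add_nonneg hc dist_nonneg).trans ht
    have hγ0t : dist (γ 0) (γ t) = t := by
      rw [hγ.dist_eq, Real.dist_eq, zero_sub, abs_neg, abs_of_nonneg ht0]
    linarith [dist_triangle (γ 0) x (γ t), dist_comm x (γ 0)]
  obtain ⟨t, ht_close, ht_far⟩ := (hclose.and hfar).exists
  obtain ⟨g, hg0, hgD, hg⟩ := hgeo x (γ t)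
  set D := dist x (γ t)
  have hc_mem : c ∈ Icc 0 D := ⟨hc, ht_far⟩
  have hD_mem : D ∈ Icc 0 D := ⟨dist_nonneg, le_rfl⟩
  refine ⟨g c, ?_, ?_⟩
  · rw [← hg0, hg 0 ⟨le_rfl, dist_nonneg⟩ c hc_mem, zero_sub, abs_neg, abs_of_nonneg hc]
  · have hrest : dist (g c) (γ t) = D - c := by
      rw [← hgD, hg c hc_mem D hD_mem, abs_sub_comm, abs_of_nonneg (by linarith)]
    linarith [sub_dist_le_busemann hγ hb (g c) t]

lemma exists_dist_eq_mul_add_sq_sub_le_mul_busemann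
    (hgeo : IsGeodesicSpace X) (hγ : Isometry γ)
    (hb : ∀ x, Tendsto (fun t ↦ t - dist x (γ t)) atTop (𝓝 (b x)))
    (x : X) {c ε : ℝ} (hc : 0 ≤ c) (hε : 0 < ε) :
    ∃ y, dist x y = c ∧ c * b x + c ^ 2 - ε ≤ c * b y := by
  rcases hc.eq_or_lt with rfl | hc
  · exact ⟨x, dist_self x, by linarith⟩
  obtain ⟨y, hxy, hy⟩ := exists_dist_eq_add_sub_le_busemann hgeo hγ hb x hc.le (div_pos hε hc)
  refine ⟨y, hxy, ?_⟩
  calc c * b x + c ^ 2 - ε = c * (b x + c - ε / c) := by field_simp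
    _ ≤ c * b y := mul_le_mul_of_nonneg_left hy hc.le


lemma exists_dist_eq_abs_mul_add_sq_sub_le_mul_busemann
    (hgeo : IsGeodesicSpace X) (hγ : Isometry γ) {bm : X → ℝ}
    (hb : ∀ x, Tendsto (fun t ↦ t - dist x (γ t)) atTop (𝓝 (b x)))
    (hbm : ∀ x, Tendsto (fun t ↦ t - dist x (γ (-t))) atTop (𝓝 (bm x)))
    (hsum : ∀ x, b x + bm x = 0) (x : X) (c : ℝ) {ε : ℝ} (hε : 0 < ε) :
    ∃ y, dist x y = |c| ∧ c * b x + c ^ 2 - ε ≤ c * b y := by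
  rcases le_or_gt 0 c with hc | hc
  · rw [abs_of_nonneg hc]
    exact exists_dist_eq_mul_add_sq_sub_le_mul_busemann hgeo hγ hb x hc hε
  · obtain ⟨y, hxy, hy⟩ := exists_dist_eq_mul_add_sq_sub_le_mul_busemann hgeo
      (hγ.comp isometry_neg) hbm x (neg_nonneg.2 hc.le) hε
    have hbm_eq (z : X) : bm z = -b z := eq_neg_of_add_eq_zero_right (hsum z)
    rw [hbm_eq, hbm_eq, neg_mul_neg, neg_mul_neg, neg_sq] at hy
    exact ⟨y, by rw [hxy, abs_of_neg hc], hy⟩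

end Busemann

lemma IsGLB.range_add_const {ι α : Type*} [AddGroup α] [Preorder α] [AddRightMono α]
    {F : ι → α} {m : α} (h : IsGLB (range F) m) (k : α) :
    IsGLB (range fun i ↦ F i + k) (m + k) := by
  have h' := (OrderIso.addRight k).isGLB_image'.2 h
  rw [← range_comp] at h'
  exact h'

lemma isGLB_range_sq_dist_div_two_sub_mul {X : Type*} [MetricSpace X] {f : X → ℝ}
    (hf : ∀ x y, f x - f y ≤ dist x y) {a : ℝ} {y : X}
    (happrox : ∀ ε > 0, ∃ w, dist y w = |a| ∧ a * f y + a ^ 2 - ε ≤ a * f w) :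
    IsGLB (range fun x ↦ dist x y ^ 2 / 2 - a * f x) (-(a * f y) - a ^ 2 / 2) := by
  refine ⟨?_, fun m hm ↦ le_of_forall_pos_le_add fun ε hε ↦ ?_⟩
  · rintro _ ⟨x, rfl⟩
    have hfxy : |f x - f y| ≤ dist x y :=
      abs_sub_le_iff.2 ⟨hf x y, by linarith [hf y x, dist_comm x y]⟩
    have hlin : a * (f x - f y) ≤ |a| * dist x y :=
      calc a * (f x - f y) ≤ |a| * |f x - f y| := by rw [← abs_mul]; exact le_abs_self _
        _ ≤ |a| * dist x y := mul_le_mul_of_nonneg_left hfxy (abs_nonneg a)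
    nlinarith [sq_nonneg (dist x y - |a|), sq_abs a]
  · obtain ⟨w, hyw, hw⟩ := happrox ε hε
    have hmw : m ≤ dist w y ^ 2 / 2 - a * f w := hm ⟨w, rfl⟩
    rw [dist_comm, hyw, sq_abs] at hmw
    linarith

theorem stmt_3_general {X : Type*} [MetricSpace X]
    (hgeo : ∀ x y : X, ∃ g : ℝ → X, g 0 = x ∧ g (dist x y) = y ∧
      ∀ s ∈ Set.Icc (0 : ℝ) (dist x y), ∀ t ∈ Set.Icc (0 : ℝ) (dist x y),
        dist (g s) (g t) = |s - t|)
    (γ : ℝ → X) (hline : ∀ t s : ℝ, dist (γ t) (γ s) = |t - s|)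
    (bp bm : X → ℝ)
    (hbp : ∀ x, Filter.Tendsto (fun t : ℝ => t - dist x (γ t)) Filter.atTop (nhds (bp x)))
    (hbm : ∀ x, Filter.Tendsto (fun t : ℝ => t - dist x (γ (-t))) Filter.atTop (nhds (bm x)))
    (hsum : ∀ x, bp x + bm x = 0)
    (a : ℝ) :
    (∃ ψ : X → ℝ, ∀ x : X,
      IsGLB (Set.range fun y : X => dist x y ^ 2 / 2 - ψ y) (a * bp x)) ∧
    (∀ y : X,
      IsGLB (Set.range fun x : X => dist x y ^ 2 / 2 - a * bp x) (-(a * bp y) - a ^ 2 / 2)) := by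
  have hγ : Isometry γ := .of_dist_eq fun t s ↦ by rw [hline, Real.dist_eq]
  have htransform (c : ℝ) (y : X) :
      IsGLB (range fun x ↦ dist x y ^ 2 / 2 - c * bp x) (-(c * bp y) - c ^ 2 / 2) :=
    isGLB_range_sq_dist_div_two_sub_mul (busemann_sub_le_dist hbp) fun _ hε ↦
      exists_dist_eq_abs_mul_add_sq_sub_le_mul_busemann hgeo hγ hbp hbm hsum y c hε
  refine ⟨⟨fun y ↦ -(a * bp y) - a ^ 2 / 2, fun x ↦ ?_⟩, htransform a⟩
  have h := (htransform (-a) x).range_add_const (a ^ 2 / 2)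
  have hrange : (range fun y ↦ dist x y ^ 2 / 2 - (-(a * bp y) - a ^ 2 / 2)) =
      range fun y ↦ dist y x ^ 2 / 2 - -a * bp y + a ^ 2 / 2 := by
    congr 1 with y
    rw [dist_comm]
    ring
  rwa [hrange, show a * bp x = -(-a * bp x) - (-a) ^ 2 / 2 + a ^ 2 / 2 by ring]

/-- Multiples of the Busemann function are `c`-concave (for the cost `c = d²/2`)
and `(a·b)^c = -a·b - a²/2`. `c`-concavity is expressed as being the `c`-transform of some
function `ψ`, and the value of an infimum is expressed via `IsGLB`. -/
theorem stmt_3 {X : Type*} [MetricSpace X] [ProperSpace X]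
    (hgeo : ∀ x y : X, ∃ g : ℝ → X, g 0 = x ∧ g (dist x y) = y ∧
      ∀ s ∈ Set.Icc (0 : ℝ) (dist x y), ∀ t ∈ Set.Icc (0 : ℝ) (dist x y),
        dist (g s) (g t) = |s - t|)
    (γ : ℝ → X) (hline : ∀ t s : ℝ, dist (γ t) (γ s) = |t - s|)
    (bp bm : X → ℝ)
    (hbp : ∀ x, Filter.Tendsto (fun t : ℝ => t - dist x (γ t)) Filter.atTop (nhds (bp x)))
    (hbm : ∀ x, Filter.Tendsto (fun t : ℝ => t - dist x (γ (-t))) Filter.atTop (nhds (bm x)))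
    (hsum : ∀ x, bp x + bm x = 0)
    (a : ℝ) :
    (∃ ψ : X → ℝ, ∀ x : X,
      IsGLB (Set.range fun y : X => dist x y ^ 2 / 2 - ψ y) (a * bp x)) ∧
    (∀ y : X,
      IsGLB (Set.range fun x : X => dist x y ^ 2 / 2 - a * bp x) (-(a * bp y) - a ^ 2 / 2)) :=
  stmt_3_general hgeo γ hline bp bm hbp hbm hsum a
end

section
/- Let (X,d) be a metric space and F: ℝ × X → X a jointly continuous map such that for each t, F_t: X → X is an isometric bijection, F_0 = id, F_{t+s} = F_t ∘ F_s, and d(F_t(x), F_s(x)) = |t-s| for all x ∈ X and t,s ∈ ℝ. Define x ~ y iff y = F_t(x) for some t, let X' = X/~ with d'(π(x),π(y)) := inf_{t∈ℝ} d(F_t(x), y). Then d' is a well-defined metric on X' and (X',d') is complete whenever (X,d) is complete and proper. -/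
/-! For any isometric group action, `⨅ g, dist (g +ᵥ x) y` is a pseudometric: invariance, symmetry
and the triangle inequality all come from reindexing the infimum over the group. It is complete
when `X` is: along a sequence whose consecutive orbit distances decay geometrically, each term can
be slid along its orbit so that consecutive terms become genuinely close in `X`, and the limit of
the slid sequence is a limit for the orbit distance.

For a flow of unit speed, `t ↦ t +ᵥ x` is an isometric embedding of `ℝ`, so `t ↦ dist (t +ᵥ x) y`
is continuous and coercive and its infimum is attained; hence orbit distance zero means that the
two points lie on the same orbit. -/

open Filter Topology

section OrbitDist

variable (G : Type*) {X : Type*} [AddGroup G] [PseudoMetricSpace X] [AddAction G X]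

noncomputable def orbitDist (x y : X) : ℝ := ⨅ g : G, dist (g +ᵥ x) y

variable {G}

theorem orbitDist_le_dist (g : G) (x y : X) : orbitDist G x y ≤ dist (g +ᵥ x) y :=
  ciInf_le ⟨0, Set.forall_mem_range.2 fun _ => dist_nonneg⟩ g

theorem orbitDist_nonneg (x y : X) : 0 ≤ orbitDist G x y :=
  le_ciInf fun _ => dist_nonneg

theorem orbitDist_self (x : X) : orbitDist G x x = 0 :=
  le_antisymm (by simpa using orbitDist_le_dist (0 : G) x x) (orbitDist_nonneg x x)

variable [IsIsometricVAdd G X]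

theorem orbitDist_vadd_vadd (g h : G) (x y : X) :
    orbitDist G (g +ᵥ x) (h +ᵥ y) = orbitDist G x y := by
  have hdist : ∀ k : G, dist (k +ᵥ g +ᵥ x) (h +ᵥ y) = dist ((-h + k + g) +ᵥ x) y := fun k => by
    rw [← dist_vadd (-h), neg_vadd_vadd, vadd_vadd, vadd_vadd, add_assoc]
  simp only [orbitDist, hdist]
  exact ((Equiv.addLeft (-h)).trans (Equiv.addRight g)).iInf_comp (g := fun k => dist (k +ᵥ x) y)

theorem orbitDist_comm (x y : X) : orbitDist G x y = orbitDist G y x := by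
  have hdist : ∀ g : G, dist (g +ᵥ x) y = dist (-g +ᵥ y) x := fun g => by
    rw [← dist_vadd (-g), neg_vadd_vadd, dist_comm]
  simp only [orbitDist, hdist]
  exact (Equiv.neg G).iInf_comp (g := fun g => dist (g +ᵥ y) x)

theorem orbitDist_triangle (x y z : X) :
    orbitDist G x z ≤ orbitDist G x y + orbitDist G y z :=
  le_ciInf_add_ciInf fun g h =>
    calc orbitDist G x z ≤ dist ((h + g) +ᵥ x) z := orbitDist_le_dist _ x z
      _ ≤ dist ((h + g) +ᵥ x) (h +ᵥ y) + dist (h +ᵥ y) z := dist_triangle _ _ _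
      _ = dist (g +ᵥ x) y + dist (h +ᵥ y) z := by rw [add_vadd, dist_vadd]

end OrbitDist

/-- `X` with the orbit pseudometric; its metric quotient is the orbit space `X ⧸ G`. -/
def WithOrbitDist (_G X : Type*) : Type _ := X

namespace WithOrbitDist

variable {G X : Type*} [AddGroup G] [PseudoMetricSpace X] [AddAction G X] [IsIsometricVAdd G X]

noncomputable instance : PseudoMetricSpace (WithOrbitDist G X) where
  dist := orbitDist G (X := X)
  dist_self := orbitDist_self (X := X)
  dist_comm := orbitDist_comm (X := X)
  dist_triangle := orbitDist_triangle (X := X)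

instance [CompleteSpace X] : CompleteSpace (WithOrbitDist G X) := by
  refine Metric.complete_of_convergent_controlled_sequences (fun n => (1 / 2) ^ n) (by simp)
    fun u hu => ?_
  let v : ℕ → X := u
  have hstep : ∀ n, ∃ a : G, dist (v n) (a +ᵥ v (n + 1)) < (1 / 2) ^ n := fun n => by
    have hlt : orbitDist G (v (n + 1)) (v n) < (1 / 2) ^ n := by
      rw [orbitDist_comm]; exact hu n n (n + 1) le_rfl n.le_succ
    obtain ⟨a, ha⟩ := exists_lt_of_ciInf_lt hlt
    exact ⟨a, by rwa [dist_comm]⟩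
  choose a ha using hstep
  let c : ℕ → G := fun n => Nat.rec 0 (fun k ck => ck + a k) n
  have hslid : ∀ n, dist (c n +ᵥ v n) (c (n + 1) +ᵥ v (n + 1)) ≤ 1 * (1 / 2) ^ n := fun n => by
    change dist _ ((c n + a n) +ᵥ _) ≤ _
    rw [add_vadd, dist_vadd, one_mul]
    exact (ha n).le
  obtain ⟨x, hx⟩ := cauchySeq_tendsto_of_complete
    (cauchySeq_of_le_geometric (1 / 2) 1 (by norm_num) hslid)
  exact ⟨x, tendsto_iff_dist_tendsto_zero.2 <| squeeze_zero (fun n => orbitDist_nonneg _ _)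
    (fun n => orbitDist_le_dist (c n) _ _) (tendsto_iff_dist_tendsto_zero.1 hx)⟩

end WithOrbitDist

theorem exists_tendsto_orbitDist_of_cauchy {G X : Type*} [AddGroup G] [PseudoMetricSpace X]
    [AddAction G X] [IsIsometricVAdd G X] [CompleteSpace X] (u : ℕ → X)
    (hu : ∀ ε > (0 : ℝ), ∃ N : ℕ, ∀ m ≥ N, ∀ n ≥ N, orbitDist G (u m) (u n) < ε) :
    ∃ x : X, Tendsto (fun n => orbitDist G (u n) x) atTop (𝓝 0) := by
  let v : ℕ → WithOrbitDist G X := u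
  obtain ⟨x, hx⟩ := cauchySeq_tendsto_of_complete (Metric.cauchySeq_iff.2 hu : CauchySeq v)
  exact ⟨x, tendsto_iff_dist_tendsto_zero.1 hx⟩

section UnitSpeedFlow

variable {X : Type*} [AddAction ℝ X]

theorem exists_dist_vadd_eq_orbitDist [PseudoMetricSpace X]
    (hspeed : ∀ (x : X) (t s : ℝ), dist (t +ᵥ x) (s +ᵥ x) = |t - s|) (x y : X) :
    ∃ t : ℝ, dist (t +ᵥ x) y = orbitDist ℝ x y := by
  have hcont : Continuous fun t : ℝ => dist (t +ᵥ x) y :=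
    (Isometry.of_dist_eq fun t s => (hspeed x t s).trans (Real.dist_eq t s).symm).continuous.dist
      continuous_const
  have hcoercive : Tendsto (fun t : ℝ => dist (t +ᵥ x) y) (cocompact ℝ) atTop := by
    refine tendsto_atTop_mono (fun t => ?_)
      (tendsto_atTop_add_const_right _ (-dist x y) tendsto_norm_cocompact_atTop)
    have hnorm : dist (t +ᵥ x) x = ‖t‖ := by simpa using hspeed x t 0
    linarith [dist_triangle (t +ᵥ x) y x, dist_comm x y]
  obtain ⟨t, ht⟩ := hcont.exists_forall_le hcoercive
  exact ⟨t, le_antisymm (le_ciInf ht) (orbitDist_le_dist t x y)⟩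

theorem orbitDist_eq_zero_iff [MetricSpace X]
    (hspeed : ∀ (x : X) (t s : ℝ), dist (t +ᵥ x) (s +ᵥ x) = |t - s|) {x y : X} :
    orbitDist ℝ x y = 0 ↔ ∃ t : ℝ, t +ᵥ x = y := by
  constructor
  · intro h
    obtain ⟨t, ht⟩ := exists_dist_vadd_eq_orbitDist hspeed x y
    exact ⟨t, dist_eq_zero.1 (ht.trans h)⟩
  · rintro ⟨t, rfl⟩
    exact le_antisymm (by simpa using orbitDist_le_dist t x (t +ᵥ x)) (orbitDist_nonneg _ _)

end UnitSpeedFlow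

theorem stmt_7_general {X : Type*} [MetricSpace X] (F : ℝ → X → X)
    (hiso : ∀ (t : ℝ) (x y : X), dist (F t x) (F t y) = dist x y)
    (hzero : ∀ x : X, F 0 x = x)
    (hgroup : ∀ (t s : ℝ) (x : X), F t (F s x) = F (t + s) x)
    (hspeed : ∀ (x : X) (t s : ℝ), dist (F t x) (F s x) = |t - s|) :
    ∀ D : X → X → ℝ, (D = fun x y => ⨅ t : ℝ, dist (F t x) y) →
      ((∀ (x y : X) (s t : ℝ), D (F s x) (F t y) = D x y) ∧
      (∀ x y : X, D x y = D y x) ∧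
      (∀ x y z : X, D x z ≤ D x y + D y z) ∧
      (∀ x y : X, 0 ≤ D x y) ∧
      (∀ x y : X, D x y = 0 ↔ ∃ t : ℝ, F t x = y) ∧
      (CompleteSpace X →
        ∀ u : ℕ → X, (∀ ε > (0 : ℝ), ∃ N : ℕ, ∀ m ≥ N, ∀ n ≥ N, D (u m) (u n) < ε) →
          ∃ x : X, Filter.Tendsto (fun n => D (u n) x) Filter.atTop (nhds 0))) := by
  let _ : AddAction ℝ X :=
    { vadd := F, zero_vadd := hzero, add_vadd := fun t s x => (hgroup t s x).symm }
  have _ : IsIsometricVAdd ℝ X := ⟨fun t => Isometry.of_dist_eq (hiso t)⟩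
  rintro D rfl
  exact ⟨fun x y s t => orbitDist_vadd_vadd s t x y, orbitDist_comm, orbitDist_triangle,
    orbitDist_nonneg, fun x y => orbitDist_eq_zero_iff hspeed,
    fun _ => exists_tendsto_orbitDist_of_cauchy⟩

/-- The quotient of `X` by a one-parameter group of isometries `F` carries a well-defined
distance `d'(π x, π y) = inf_t d(F_t x, y)`, which is a metric on the quotient, and the
quotient is complete whenever `X` is complete (and proper). The statement is phrased on `X`
itself via the function `D x y = ⨅ t, d(F_t x, y)`: invariance under the flow expresses
well-definedness on the quotient, `D x y = 0 ↔ x ∼ y` expresses positivity, and the last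
clause expresses completeness of the quotient metric. -/
theorem stmt_7 {X : Type*} [MetricSpace X] [ProperSpace X] (F : ℝ → X → X)
    (hcont : Continuous fun p : ℝ × X => F p.1 p.2)
    (hiso : ∀ (t : ℝ) (x y : X), dist (F t x) (F t y) = dist x y)
    (hbij : ∀ t : ℝ, Function.Bijective (F t))
    (hzero : ∀ x : X, F 0 x = x)
    (hgroup : ∀ (t s : ℝ) (x : X), F t (F s x) = F (t + s) x)
    (hspeed : ∀ (x : X) (t s : ℝ), dist (F t x) (F s x) = |t - s|) :
    ∀ D : X → X → ℝ, (D = fun x y => ⨅ t : ℝ, dist (F t x) y) →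
      ((∀ (x y : X) (s t : ℝ), D (F s x) (F t y) = D x y) ∧
      (∀ x y : X, D x y = D y x) ∧
      (∀ x y z : X, D x z ≤ D x y + D y z) ∧
      (∀ x y : X, 0 ≤ D x y) ∧
      (∀ x y : X, D x y = 0 ↔ ∃ t : ℝ, F t x = y) ∧
      (CompleteSpace X →
        ∀ u : ℕ → X, (∀ ε > (0 : ℝ), ∃ N : ℕ, ∀ m ≥ N, ∀ n ≥ N, D (u m) (u n) < ε) →
          ∃ x : X, Filter.Tendsto (fun n => D (u n) x) Filter.atTop (nhds 0))) :=
  stmt_7_general F hiso hzero hgroup hspeed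
end

section
/- Let (X',d') be a metric space and equip X' × ℝ with the distance D((x',t),(y',s)) := sqrt(d'(x',y')² + |t-s|²). Let T: X' × ℝ → X be defined via a one-parameter group of isometries F_t of a metric space (X,d) with a section ι: X' → X (i.e. T(x',t) = F_{-t}(ι(x'))) satisfying d'(x',y') ≤ d(ι(x'),ι(y')) and d(F_t(x),x) = |t|. Then (1/√2)·D((x'_1,t_1),(x'_2,t_2)) ≤ d(T(x'_1,t_1), T(x'_2,t_2)) ≤ √2·D((x'_1,t_1),(x'_2,t_2)), provided additionally that the projections π: X → X' and b: X → ℝ (with b(F_t(x)) = b(x) - t, π ∘ T(x',t) = x', b ∘ T(x',t) = t) are both 1-Lipschitz and d(ι(x'),ι(y')) = d'(x',y'). -/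
/-!
The lower bound holds because `π` and `b` are `1`-Lipschitz and recover the two coordinates from
`T`, so both `d'(x'₁, x'₂)` and `|t₁ - t₂|` are at most `d(T(x'₁, t₁), T(x'₂, t₂))`.
For the upper bound, pass from `F_{-t₁}(ι x'₁)` to `F_{-t₂}(ι x'₂)` through `F_{-t₂}(ι x'₁)`:
the first leg is a displacement along the flow, of length `|t₁ - t₂|`, and the second is
the isometric image of `d(ι x'₁, ι x'₂) = d'(x'₁, x'₂)`. Finally `a + c ≤ √2 · √(a² + c²)`.
-/

section SqrtTwo

open Real

lemma one_div_sqrt_two_mul_sqrt_sq_add_sq_le {a c d : ℝ} (ha : 0 ≤ a) (hc : 0 ≤ c)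
    (had : a ≤ d) (hcd : c ≤ d) : 1 / √2 * √(a ^ 2 + c ^ 2) ≤ d := by
  have hd : 0 ≤ d := ha.trans had
  have hsq : a ^ 2 + c ^ 2 ≤ (√2 * d) ^ 2 := by
    rw [mul_pow, sq_sqrt zero_le_two]
    nlinarith [pow_le_pow_left₀ ha had 2, pow_le_pow_left₀ hc hcd 2]
  rw [one_div_mul_eq_div, div_le_iff₀' (by positivity)]
  exact sqrt_le_iff.2 ⟨by positivity, hsq⟩

lemma add_le_sqrt_two_mul_sqrt_sq_add_sq (a c : ℝ) : a + c ≤ √2 * √(a ^ 2 + c ^ 2) := by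
  rw [← sqrt_mul zero_le_two]
  apply le_sqrt_of_sq_le
  nlinarith [sq_nonneg (a - c)]

end SqrtTwo

section IsometricFlow

variable {X : Type*} [PseudoMetricSpace X] {F : ℝ → X → X}

lemma dist_flow_le (hiso : ∀ (t : ℝ) (x y : X), dist (F t x) (F t y) = dist x y)
    (hgroup : ∀ (t s : ℝ) (x : X), F t (F s x) = F (t + s) x)
    (hspeed : ∀ (t : ℝ) (x : X), dist (F t x) x = |t|) (s t : ℝ) (x y : X) :
    dist (F s x) (F t y) ≤ |s - t| + dist x y := by
  have hshift : F s x = F t (F (s - t) x) := by rw [hgroup, add_sub_cancel]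
  calc dist (F s x) (F t y) ≤ dist (F s x) (F t x) + dist (F t x) (F t y) := dist_triangle _ _ _
    _ = |s - t| + dist x y := by rw [hshift, hiso, hiso, hspeed]

end IsometricFlow

theorem stmt_8_general {X X' : Type*} [MetricSpace X] [MetricSpace X']
    (F : ℝ → X → X) (ι : X' → X) (π : X → X') (b : X → ℝ)
    (hiso : ∀ (t : ℝ) (x y : X), dist (F t x) (F t y) = dist x y)
    (hgroup : ∀ (t s : ℝ) (x : X), F t (F s x) = F (t + s) x)
    (hspeed : ∀ (t : ℝ) (x : X), dist (F t x) x = |t|)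
    (hι : ∀ x' y' : X', dist (ι x') (ι y') = dist x' y')
    (hπ : LipschitzWith 1 π) (hb : LipschitzWith 1 b)
    (T : X' × ℝ → X) (hT : ∀ (x' : X') (t : ℝ), T (x', t) = F (-t) (ι x'))
    (hπT : ∀ (x' : X') (t : ℝ), π (T (x', t)) = x')
    (hbT : ∀ (x' : X') (t : ℝ), b (T (x', t)) = t) :
    ∀ (x'₁ x'₂ : X') (t₁ t₂ : ℝ),
      (1 / Real.sqrt 2) * Real.sqrt (dist x'₁ x'₂ ^ 2 + |t₁ - t₂| ^ 2) ≤
          dist (T (x'₁, t₁)) (T (x'₂, t₂)) ∧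
        dist (T (x'₁, t₁)) (T (x'₂, t₂)) ≤
          Real.sqrt 2 * Real.sqrt (dist x'₁ x'₂ ^ 2 + |t₁ - t₂| ^ 2) := by
  intro x'₁ x'₂ t₁ t₂
  have hπ_le : dist x'₁ x'₂ ≤ dist (T (x'₁, t₁)) (T (x'₂, t₂)) := by
    simpa [hπT] using hπ.dist_le_mul (T (x'₁, t₁)) (T (x'₂, t₂))
  have hb_le : |t₁ - t₂| ≤ dist (T (x'₁, t₁)) (T (x'₂, t₂)) := by
    simpa [hbT, Real.dist_eq] using hb.dist_le_mul (T (x'₁, t₁)) (T (x'₂, t₂))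
  have hT_le : dist (T (x'₁, t₁)) (T (x'₂, t₂)) ≤ dist x'₁ x'₂ + |t₁ - t₂| := by
    have := dist_flow_le hiso hgroup hspeed (-t₁) (-t₂) (ι x'₁) (ι x'₂)
    rw [neg_sub_neg, abs_sub_comm, hι] at this
    rw [hT, hT]
    linarith
  exact ⟨one_div_sqrt_two_mul_sqrt_sq_add_sq_le dist_nonneg (abs_nonneg _) hπ_le hb_le,
    hT_le.trans (add_le_sqrt_two_mul_sqrt_sq_add_sq _ _)⟩

/-- The maps `T : X' × ℝ → X` and `S = (π, b)` are bi-Lipschitz with constants `√2`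
with respect to the product distance `D((x',t),(y',s)) = √(d'(x',y')² + |t-s|²)`. -/
theorem stmt_8 {X X' : Type*} [MetricSpace X] [MetricSpace X']
    (F : ℝ → X → X) (ι : X' → X) (π : X → X') (b : X → ℝ)
    (hiso : ∀ (t : ℝ) (x y : X), dist (F t x) (F t y) = dist x y)
    (hgroup : ∀ (t s : ℝ) (x : X), F t (F s x) = F (t + s) x)
    (hzero : ∀ x : X, F 0 x = x)
    (hspeed : ∀ (t : ℝ) (x : X), dist (F t x) x = |t|)
    (hι : ∀ x' y' : X', dist (ι x') (ι y') = dist x' y')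
    (hπ : LipschitzWith 1 π) (hb : LipschitzWith 1 b)
    (hbF : ∀ (t : ℝ) (x : X), b (F t x) = b x - t)
    (T : X' × ℝ → X) (hT : ∀ (x' : X') (t : ℝ), T (x', t) = F (-t) (ι x'))
    (hπT : ∀ (x' : X') (t : ℝ), π (T (x', t)) = x')
    (hbT : ∀ (x' : X') (t : ℝ), b (T (x', t)) = t) :
    ∀ (x'₁ x'₂ : X') (t₁ t₂ : ℝ),
      (1 / Real.sqrt 2) * Real.sqrt (dist x'₁ x'₂ ^ 2 + |t₁ - t₂| ^ 2) ≤
          dist (T (x'₁, t₁)) (T (x'₂, t₂)) ∧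
        dist (T (x'₁, t₁)) (T (x'₂, t₂)) ≤
          Real.sqrt 2 * Real.sqrt (dist x'₁ x'₂ ^ 2 + |t₁ - t₂| ^ 2) :=
  stmt_8_general F ι π b hiso hgroup hspeed hι hπ hb T hT hπT hbT
end

section
/- Let (X,d) be a proper metric space such that every 1-Lipschitz-on-chains function is globally 1-Lipschitz in the following sense: for every ε > 0 and x ∈ X, the function f_ε(y) := inf { Σ_i d(x_i, x_{i+1}) : x_0 = x, x_n = y, d(x_i,x_{i+1}) ≤ ε } is 1-Lipschitz on X. Then, if moreover f_ε(y) → d(x,y) as ε → 0 for all x,y (equivalently the theses of the proposition on Lipschitz representatives hold), (X,d) is a geodesic space. -/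
/-- The set of lengths of `ε`-chains joining `x` to `y`. -/
def chainLengths {X : Type*} [MetricSpace X] (ε : ℝ) (x y : X) : Set ℝ :=
  { L | ∃ (n : ℕ) (c : ℕ → X), c 0 = x ∧ c n = y ∧
      (∀ i < n, dist (c i) (c (i + 1)) ≤ ε) ∧
      L = ∑ i ∈ Finset.range n, dist (c i) (c (i + 1)) }

/-- The infimal length of `ε`-chains from `x` to `y`. -/
noncomputable def chainDist {X : Type*} [MetricSpace X] (ε : ℝ) (x : X) : X → ℝ :=
  fun y => sInf (chainLengths ε x y)

/-!
Take `ε`-chains from `x` to `y` whose length exceeds `d = dist x y` by at most `ε`; such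
chains exist for small `ε` because `f_ε(y) → d`. Reading off the chain point reached at
arclength `t` gives a map `[0, d] → X` that distorts distances by at most `2ε`, since a chain
that is almost as short as `d` cannot wander. In a proper space these approximate geodesics
have a pointwise cluster point (Tychonoff), which is an exact geodesic.
-/

open Filter Set Topology

theorem exists_ultrafilter_tendsto_pi {ι α X : Type*} [TopologicalSpace X] (l : Filter ι)
    [l.NeBot] {K : Set X} (hK : IsCompact K) (G : ι → α → X) (hG : ∀ i t, G i t ∈ K) :
    ∃ (U : Ultrafilter ι) (g : α → X), ↑U ≤ l ∧ ∀ t, Tendsto (fun i => G i t) U (𝓝 (g t)) := by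
  let U := Ultrafilter.of l
  obtain ⟨g, -, hg⟩ := (isCompact_univ_pi fun _ : α => hK).ultrafilter_le_nhds (U.map G)
    (le_principal_iff.2 <| mem_map.2 <| univ_mem' fun i => mem_univ_pi.2 (hG i))
  exact ⟨U, g, Ultrafilter.of_le l, tendsto_pi_nhds.1 hg⟩

section

variable {X : Type*} [MetricSpace X]

def IsApproxGeodesic (η : ℝ) (x y : X) (G : ℝ → X) : Prop :=
  dist (G 0) x ≤ η ∧ dist (G (dist x y)) y ≤ η ∧
    ∀ s ∈ Icc 0 (dist x y), ∀ t ∈ Icc 0 (dist x y), |dist (G s) (G t) - (|s - t|)| ≤ η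

theorem IsApproxGeodesic.dist_le {η : ℝ} {x y : X} {G : ℝ → X} (hG : IsApproxGeodesic η x y G)
    {t : ℝ} (ht : t ∈ Icc 0 (dist x y)) : dist (G t) x ≤ dist x y + 2 * η := by
  have h := (abs_le.1 (hG.2.2 t ht 0 (left_mem_Icc.2 dist_nonneg))).2
  rw [sub_zero, abs_of_nonneg ht.1] at h
  linarith [dist_triangle (G t) (G 0) x, hG.1, ht.2]

theorem exists_geodesic_of_forall_isApproxGeodesic [ProperSpace X] {x y : X}
    (h : ∀ η > 0, ∃ G, IsApproxGeodesic η x y G) :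
    ∃ g : ℝ → X, g 0 = x ∧ g (dist x y) = y ∧
      ∀ s ∈ Icc 0 (dist x y), ∀ t ∈ Icc 0 (dist x y), dist (g s) (g t) = |s - t| := by
  set d := dist x y
  choose G hG using fun n : ℕ => h (1 / ((n : ℝ) + 1)) Nat.one_div_pos_of_nat
  -- clamping the parameter to `[0, d]` keeps every value in one compact ball
  set H : ℕ → ℝ → X := fun n t => G n (projIcc 0 d dist_nonneg t)
  have hH : ∀ n, ∀ t ∈ Icc 0 d, H n t = G n t := fun n t ht => by
    simp only [H, projIcc_of_mem _ ht]
  have hball : ∀ n t, H n t ∈ Metric.closedBall x (d + 2) := fun n t => by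
    have : 1 / ((n : ℝ) + 1) ≤ 1 := (div_le_one (by positivity)).2 (by simp)
    exact Metric.mem_closedBall.2 (((hG n).dist_le (projIcc 0 d _ t).2).trans (by linarith))
  obtain ⟨U, g, hU, hg⟩ :=
    exists_ultrafilter_tendsto_pi atTop (isCompact_closedBall x (d + 2)) H hball
  have hlim : ∀ {u : ℕ → ℝ} {a b : ℝ}, (∀ n, |u n - a| ≤ 1 / ((n : ℝ) + 1)) →
      Tendsto u U (𝓝 b) → b = a := fun hu hb =>
    tendsto_nhds_unique hb <| (tendsto_iff_norm_sub_tendsto_zero.2 <|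
      squeeze_zero (fun _ => norm_nonneg _) (fun n => (Real.norm_eq_abs _).trans_le (hu n))
        tendsto_one_div_add_atTop_nhds_zero_nat).mono_left hU
  have hend : ∀ {t : ℝ} {z : X}, t ∈ Icc 0 d → (∀ n, dist (G n t) z ≤ 1 / ((n : ℝ) + 1)) →
      g t = z := fun ht hz => dist_eq_zero.1 <|
    hlim (fun n => by rw [sub_zero, abs_of_nonneg dist_nonneg, hH n _ ht]; exact hz n)
      ((hg _).dist tendsto_const_nhds)
  refine ⟨g, hend (left_mem_Icc.2 dist_nonneg) fun n => (hG n).1,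
    hend (right_mem_Icc.2 dist_nonneg) fun n => (hG n).2.1, fun s hs t ht => ?_⟩
  exact hlim (fun n => by rw [hH n s hs, hH n t ht]; exact (hG n).2.2 s hs t ht)
    ((hg s).dist (hg t))

noncomputable def chainLength (c : ℕ → X) (n : ℕ) : ℝ :=
  ∑ i ∈ Finset.range n, dist (c i) (c (i + 1))

theorem chainLength_zero (c : ℕ → X) : chainLength c 0 = 0 :=
  Finset.sum_range_zero _

theorem dist_le_chainLength_sub (c : ℕ → X) {i j : ℕ} (h : i ≤ j) :
    dist (c i) (c j) ≤ chainLength c j - chainLength c i := by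
  rw [chainLength, chainLength, ← Finset.sum_Ico_eq_sub _ h]
  exact dist_le_Ico_sum_dist c h

theorem dist_le_chainLength (c : ℕ → X) (j : ℕ) : dist (c 0) (c j) ≤ chainLength c j := by
  simpa [chainLength_zero] using dist_le_chainLength_sub c (Nat.zero_le j)

open Classical in
noncomputable def arclengthIndex (c : ℕ → X) (m : ℕ) (t : ℝ) : ℕ :=
  Nat.findGreatest (fun i => chainLength c i ≤ t) m

theorem arclengthIndex_le (c : ℕ → X) (m : ℕ) (t : ℝ) : arclengthIndex c m t ≤ m :=
  Nat.findGreatest_le m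

theorem chainLength_arclengthIndex_le (c : ℕ → X) (m : ℕ) {t : ℝ} (ht : 0 ≤ t) :
    chainLength c (arclengthIndex c m t) ≤ t := by
  classical
  exact Nat.findGreatest_spec (P := fun i => chainLength c i ≤ t) (Nat.zero_le m)
    (by rwa [chainLength_zero])

theorem le_chainLength_arclengthIndex_add (c : ℕ → X) {m : ℕ} {ε t : ℝ} (hε : 0 ≤ ε)
    (hsteps : ∀ i < m, dist (c i) (c (i + 1)) ≤ ε) (ht : t ≤ chainLength c m) :
    t ≤ chainLength c (arclengthIndex c m t) + ε := by
  classical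
  rcases (arclengthIndex_le c m t).eq_or_lt with h | h
  · rw [h]
    linarith
  · have hnext : t < chainLength c (arclengthIndex c m t + 1) :=
      not_le.1 (Nat.findGreatest_is_greatest (Nat.lt_succ_self _) h)
    rw [chainLength, Finset.sum_range_succ, ← chainLength] at hnext
    linarith [hsteps _ h]

theorem arclengthIndex_mono (c : ℕ → X) (m : ℕ) {s t : ℝ} (hs : 0 ≤ s) (hst : s ≤ t) :
    arclengthIndex c m s ≤ arclengthIndex c m t := by
  classical
  exact Nat.le_findGreatest (arclengthIndex_le c m s)
    ((chainLength_arclengthIndex_le c m hs).trans hst)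

variable {c : ℕ → X} {m : ℕ} {ε : ℝ}

theorem abs_dist_arclengthIndex_sub_le (hε : 0 ≤ ε)
    (hsteps : ∀ i < m, dist (c i) (c (i + 1)) ≤ ε)
    (hlen : chainLength c m ≤ dist (c 0) (c m) + ε)
    {s t : ℝ} (hs : 0 ≤ s) (hst : s ≤ t) (ht : t ≤ dist (c 0) (c m)) :
    |dist (c (arclengthIndex c m s)) (c (arclengthIndex c m t)) - (t - s)| ≤ 2 * ε := by
  set I := arclengthIndex c m s
  set J := arclengthIndex c m t
  have hd := dist_le_chainLength c m
  have hSI := chainLength_arclengthIndex_le c m hs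
  have hSJ := chainLength_arclengthIndex_le c m (hs.trans hst)
  have hsI := le_chainLength_arclengthIndex_add c hε hsteps (hst.trans (ht.trans hd))
  have htJ := le_chainLength_arclengthIndex_add c hε hsteps (ht.trans hd)
  have hIJ := dist_le_chainLength_sub c (arclengthIndex_mono c m hs hst)
  have h0I := dist_le_chainLength c I
  have hJm := dist_le_chainLength_sub c (arclengthIndex_le c m t)
  -- a chain this short cannot leave the segment: `x`, `c I`, `c J`, `y` are nearly aligned
  have htri : dist (c 0) (c m) ≤ dist (c 0) (c I) + dist (c I) (c J) + dist (c J) (c m) :=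
    (dist_triangle4 _ _ _ _)
  rw [abs_le]
  constructor <;> linarith

theorem isApproxGeodesic_arclength (hsteps : ∀ i < m, dist (c i) (c (i + 1)) ≤ ε)
    (hlen : chainLength c m ≤ dist (c 0) (c m) + ε) :
    IsApproxGeodesic (2 * ε) (c 0) (c m) (fun t => c (arclengthIndex c m t)) := by
  have hd := dist_le_chainLength c m
  have hε : 0 ≤ ε := by linarith [@dist_nonneg _ _ (c 0) (c m)]
  refine ⟨?_, ?_, fun s hs t ht => ?_⟩
  · have h0 := dist_le_chainLength c (arclengthIndex c m 0)
    have hS := chainLength_arclengthIndex_le c m le_rfl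
    rw [dist_comm]
    linarith
  · have hJm := dist_le_chainLength_sub c (arclengthIndex_le c m (dist (c 0) (c m)))
    have hdJ := le_chainLength_arclengthIndex_add c hε hsteps hd
    linarith
  · rcases le_total s t with hst | hts
    · rw [abs_sub_comm s t, abs_of_nonneg (sub_nonneg.2 hst)]
      exact abs_dist_arclengthIndex_sub_le hε hsteps hlen hs.1 hst ht.2
    · rw [dist_comm, abs_of_nonneg (sub_nonneg.2 hts)]
      exact abs_dist_arclengthIndex_sub_le hε hsteps hlen ht.1 hts hs.2

theorem exists_chain_of_tendsto_chainDist {x y : X}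
    (hconv : Tendsto (fun ε : ℝ => chainDist ε x y) (𝓝[>] 0) (𝓝 (dist x y)))
    {η : ℝ} (hη : 0 < η) :
    ∃ (m : ℕ) (c : ℕ → X), c 0 = x ∧ c m = y ∧ (∀ i < m, dist (c i) (c (i + 1)) ≤ η) ∧
      chainLength c m ≤ dist x y + η := by
  have hne : ∀ᶠ ε in 𝓝[>] 0, (chainLengths ε x y).Nonempty := by
    rcases eq_or_ne x y with rfl | hxy
    · exact Eventually.of_forall fun ε => ⟨0, 0, fun _ => x, rfl, rfl, by simp, by simp⟩
    · -- `sInf ∅ = 0`, while `chainDist ε x y` is eventually close to `dist x y > 0`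
      filter_upwards [hconv (Ioi_mem_nhds (dist_pos.2 hxy))] with ε hε
      by_contra hempty
      simp [chainDist, not_nonempty_iff_eq_empty.1 hempty] at hε
  have hlt : ∀ᶠ ε in 𝓝[>] 0, chainDist ε x y < dist x y + η :=
    hconv (Iio_mem_nhds (lt_add_of_pos_right (dist x y) hη))
  have hsmall : ∀ᶠ ε in 𝓝[>] (0 : ℝ), ε < η := mem_nhdsWithin_of_mem_nhds (Iio_mem_nhds hη)
  obtain ⟨ε, hne, hlt, hsmall⟩ := (hne.and (hlt.and hsmall)).exists
  have hbdd : BddBelow (chainLengths ε x y) := ⟨0, by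
    rintro _ ⟨m, c, -, -, -, rfl⟩
    exact Finset.sum_nonneg fun _ _ => dist_nonneg⟩
  obtain ⟨_, ⟨m, c, hc0, hcm, hsteps, rfl⟩, hL⟩ := (csInf_lt_iff hbdd hne).1 hlt
  exact ⟨m, c, hc0, hcm, fun i hi => (hsteps i hi).trans hsmall.le, hL.le⟩

end

theorem stmt_12_general {X : Type*} [MetricSpace X] [ProperSpace X]
    (hconv : ∀ x y : X, Filter.Tendsto (fun ε : ℝ => chainDist ε x y)
      (nhdsWithin 0 (Set.Ioi 0)) (nhds (dist x y))) :
    ∀ x y : X, ∃ g : ℝ → X, g 0 = x ∧ g (dist x y) = y ∧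
      ∀ s ∈ Set.Icc (0 : ℝ) (dist x y), ∀ t ∈ Set.Icc (0 : ℝ) (dist x y),
        dist (g s) (g t) = |s - t| := by
  intro x y
  refine exists_geodesic_of_forall_isApproxGeodesic fun η hη => ?_
  obtain ⟨m, c, rfl, rfl, hsteps, hlen⟩ :=
    exists_chain_of_tendsto_chainDist (hconv x y) (half_pos hη)
  exact ⟨_, mul_div_cancel₀ η two_ne_zero ▸ isApproxGeodesic_arclength hsteps hlen⟩

/-- If in a proper metric space every infimal `ε`-chain-length function `f_ε = chainDist ε x`
is (globally) 1-Lipschitz and `f_ε(y) → d(x,y)` as `ε ↓ 0`, then the space is geodesic. -/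
theorem stmt_12 {X : Type*} [MetricSpace X] [ProperSpace X]
    (hlip : ∀ ε > (0 : ℝ), ∀ x : X, LipschitzWith 1 (chainDist ε x))
    (hconv : ∀ x y : X, Filter.Tendsto (fun ε : ℝ => chainDist ε x y)
      (nhdsWithin 0 (Set.Ioi 0)) (nhds (dist x y))) :
    ∀ x y : X, ∃ g : ℝ → X, g 0 = x ∧ g (dist x y) = y ∧
      ∀ s ∈ Set.Icc (0 : ℝ) (dist x y), ∀ t ∈ Set.Icc (0 : ℝ) (dist x y),
        dist (g s) (g t) = |s - t| :=
  stmt_12_general hconv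
end

section
/- Let (X,d) be a proper metric space and φ: X → ℝ a locally Lipschitz c-concave function (c = d²/2). Then for every x ∈ X the set ∂^c φ(x) is nonempty; more precisely, any sequence (y_n) with φ(x) = lim_n (d²(x,y_n)/2 - φ^c(y_n)) is bounded, and any limit point belongs to ∂^c φ(x). -/
/-! Along a geodesic from `x` towards a far point `y`, the cost `d(·, y)²/2` drops at rate
`d(x, y)`, while a `c`-concave `φ` lies below this cost shifted by `φ^c(y)` and can drop only at
its local Lipschitz rate near `x`. Hence, if `d(x, y)²/2 - φ^c(y)` stays bounded, `d(x, y)` does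
too. So minimizing sequences are bounded, have cluster points by properness, and passing to the
limit in `φ^c(yₙ) ≤ d(z, yₙ)²/2 - φ(z)` shows that every cluster point is in `∂^c φ(x)`. -/

open Filter Metric Topology

def HasMidpoints (X : Type*) [MetricSpace X] : Prop :=
  ∀ x y : X, ∃ z : X, dist x z = dist x y / 2 ∧ dist z y = dist x y / 2

namespace HasMidpoints

variable {X : Type*} [MetricSpace X]

theorem exists_dist_eq_div_two_pow (h : HasMidpoints X) (x y : X) (k : ℕ) :
    ∃ z, dist x z = dist x y / 2 ^ k ∧ dist z y = dist x y - dist x y / 2 ^ k := by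
  induction k with
  | zero => exact ⟨y, by simp⟩
  | succ k ih =>
    obtain ⟨z, hxz, hzy⟩ := ih
    obtain ⟨m, hxm, hmz⟩ := h x z
    have hxm' : dist x m = dist x y / 2 ^ (k + 1) := by rw [hxm, hxz, pow_succ, div_div]
    refine ⟨m, hxm', le_antisymm ?_ ?_⟩
    · calc dist m y ≤ dist m z + dist z y := dist_triangle m z y
        _ = dist x y - dist x y / 2 ^ (k + 1) := by rw [hmz, hxz, hzy, pow_succ]; ring
    · linarith [dist_triangle x m y]

theorem exists_dist_mem_Ico (h : HasMidpoints X) {x y : X} {r : ℝ} (hr : 0 < r)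
    (hry : r ≤ dist x y) :
    ∃ z, dist x z ∈ Set.Ico (r / 2) r ∧ dist z y = dist x y - dist x z := by
  obtain ⟨k, hk, hk'⟩ := exists_nat_pow_near ((one_le_div hr).2 hry) one_lt_two
  obtain ⟨z, hxz, hzy⟩ := h.exists_dist_eq_div_two_pow x y (k + 1)
  have h2k : (0 : ℝ) < 2 ^ k := by positivity
  rw [le_div_iff₀ hr] at hk
  rw [div_lt_iff₀ hr] at hk'
  refine ⟨z, ⟨?_, ?_⟩, by rw [hzy, hxz]⟩
  · rw [hxz, le_div_iff₀ (by positivity), pow_succ]; nlinarith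
  · rw [hxz, div_lt_iff₀ (by positivity)]; linarith

theorem dist_le_of_forall_le_dist_sq_sub (h : HasMidpoints X) {φ : X → ℝ} {K : NNReal} {x y : X}
    {r a B : ℝ} (hr : 0 < r) (hK : LipschitzOnWith K φ (ball x r))
    (hφ : ∀ z, φ z ≤ dist z y ^ 2 / 2 - a) (hB : dist x y ^ 2 / 2 - a ≤ B) :
    dist x y ≤ max r (r / 2 + K + 2 * (B - φ x) / r) := by
  rcases lt_or_ge (dist x y) r with hyr | hry
  · exact le_max_of_le_left hyr.le
  refine le_max_of_le_right ?_
  obtain ⟨z, ⟨hsr, hsr'⟩, hzy⟩ := h.exists_dist_mem_Ico hr hry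
  set d := dist x y
  set s := dist x z
  have hs : 0 < s := by linarith
  have hφxz : φ x - φ z ≤ K * s := by
    have := hK.dist_le_mul x (mem_ball_self hr) z (by rwa [mem_ball, dist_comm])
    exact (abs_le.1 (Real.dist_eq _ _ ▸ this)).2
  have hφz := hφ z
  rw [hzy] at hφz
  have hE : 0 ≤ B - φ x := by linarith [hφ x, dist_self x]
  -- `φ x - K s ≤ φ z ≤ (d - s)²/2 - a ≤ B - d s + s²/2`
  have hdrop : d * s ≤ (B - φ x) + K * s + s ^ 2 / 2 := by nlinarith
  have hE' : B - φ x ≤ 2 * (B - φ x) / r * s := by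
    rw [div_mul_eq_mul_div, le_div_iff₀ hr]; nlinarith
  refine le_of_mul_le_mul_right ?_ hs
  nlinarith

end HasMidpoints

section CConcave

variable {X : Type*} [MetricSpace X] {φ φc : X → ℝ}

theorem add_le_dist_sq_of_isGLB
    (hφc : ∀ y, IsGLB (Set.range fun x : X => dist x y ^ 2 / 2 - φ x) (φc y)) (x y : X) :
    φ x + φc y ≤ dist x y ^ 2 / 2 := by
  linarith [(hφc y).1 ⟨x, rfl⟩]

theorem exists_dist_le_of_tendsto (hmid : HasMidpoints X) (hlip : LocallyLipschitz φ)
    (hle : ∀ x y, φ x + φc y ≤ dist x y ^ 2 / 2) {x : X} {y : ℕ → X}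
    (htend : Tendsto (fun n => dist x (y n) ^ 2 / 2 - φc (y n)) atTop (𝓝 (φ x))) :
    ∃ C, ∀ n, dist x (y n) ≤ C := by
  obtain ⟨K, t, ht, hK⟩ := hlip x
  obtain ⟨r, hr, hball⟩ := Metric.mem_nhds_iff.1 ht
  obtain ⟨B, hB⟩ := htend.bddAbove_range
  exact ⟨_, fun n => hmid.dist_le_of_forall_le_dist_sq_sub hr (hK.mono hball)
    (fun z => by linarith [hle z (y n)]) (hB ⟨n, rfl⟩)⟩

theorem add_eq_dist_sq_of_mapClusterPt
    (hφc : ∀ y, IsGLB (Set.range fun x : X => dist x y ^ 2 / 2 - φ x) (φc y)) {x p : X}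
    {y : ℕ → X} (htend : Tendsto (fun n => dist x (y n) ^ 2 / 2 - φc (y n)) atTop (𝓝 (φ x)))
    (hp : MapClusterPt p atTop y) :
    φ x + φc p = dist x p ^ 2 / 2 := by
  obtain ⟨ψ, hψ, hyψ⟩ := hp.tendsto_subseq
  have hge : dist x p ^ 2 / 2 - φ x ≤ φc p := by
    refine (hφc p).2 ?_
    rintro _ ⟨z, rfl⟩
    have hcost : Continuous fun q => dist x q ^ 2 / 2 - dist z q ^ 2 / 2 + φ z := by fun_prop
    have hlim : dist x p ^ 2 / 2 - dist z p ^ 2 / 2 + φ z ≤ φ x :=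
      le_of_tendsto_of_tendsto ((hcost.tendsto p).comp hyψ) (htend.comp hψ.tendsto_atTop)
        (Eventually.of_forall fun n => by
          simp only [Function.comp_apply]
          linarith [add_le_dist_sq_of_isGLB hφc z (y (ψ n))])
    linarith
  linarith [add_le_dist_sq_of_isGLB hφc x p]

theorem exists_mapClusterPt_of_dist_le [ProperSpace X] {x : X} {y : ℕ → X} {C : ℝ}
    (hC : ∀ n, dist x (y n) ≤ C) : ∃ p, MapClusterPt p atTop y :=
  let ⟨p, _, hp⟩ := (isCompact_closedBall x C).exists_mapClusterPt
    (tendsto_principal.2 (Eventually.of_forall fun n => mem_closedBall'.2 (hC n)))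
  ⟨p, hp⟩

end CConcave

/-- In a proper geodesic space, a locally Lipschitz `c`-concave function `φ` has nonempty
`c`-superdifferential at every point; moreover, any minimizing sequence `(y_n)` for
`φ(x) = inf_y (d²(x,y)/2 - φ^c(y))` is bounded, and any of its cluster points belongs
to `∂^c φ(x)`. -/
theorem stmt_15 {X : Type*} [MetricSpace X] [ProperSpace X]
    (hgeo : ∀ x y : X, ∃ z : X, dist x z = dist x y / 2 ∧ dist z y = dist x y / 2)
    (φ φc : X → ℝ) (hlip : LocallyLipschitz φ)
    (hφc : ∀ y : X, IsGLB (Set.range fun x : X => dist x y ^ 2 / 2 - φ x) (φc y))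
    (hφ : ∀ x : X, IsGLB (Set.range fun y : X => dist x y ^ 2 / 2 - φc y) (φ x)) :
    ∀ x : X, (∃ y : X, φ x + φc y = dist x y ^ 2 / 2) ∧
      ∀ y : ℕ → X,
        Filter.Tendsto (fun n => dist x (y n) ^ 2 / 2 - φc (y n)) Filter.atTop (nhds (φ x)) →
        (∃ C : ℝ, ∀ n, dist x (y n) ≤ C) ∧
        (∀ p : X, MapClusterPt p Filter.atTop y → φ x + φc p = dist x p ^ 2 / 2) := by
  intro x
  have hmin : ∀ y : ℕ → X, Tendsto (fun n => dist x (y n) ^ 2 / 2 - φc (y n)) atTop (𝓝 (φ x)) →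
      (∃ C : ℝ, ∀ n, dist x (y n) ≤ C) ∧
        ∀ p : X, MapClusterPt p atTop y → φ x + φc p = dist x p ^ 2 / 2 :=
    fun y htend => ⟨exists_dist_le_of_tendsto hgeo hlip (add_le_dist_sq_of_isGLB hφc) htend,
      fun _ hp => add_eq_dist_sq_of_mapClusterPt hφc htend hp⟩
  refine ⟨?_, hmin⟩
  obtain ⟨u, -, -, hu, hmem⟩ := (hφ x).exists_seq_antitone_tendsto ⟨_, x, rfl⟩
  choose y hy using hmem
  have htend : Tendsto (fun n => dist x (y n) ^ 2 / 2 - φc (y n)) atTop (𝓝 (φ x)) := by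
    simpa only [hy] using hu
  obtain ⟨C, hC⟩ := (hmin y htend).1
  obtain ⟨p, hp⟩ := exists_mapClusterPt_of_dist_le hC
  exact ⟨p, (hmin y htend).2 p hp⟩
end
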